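/- Under the inverse scattering transform M(λ,J) = M_1 (built recursively as M_a = Φ_1(Ω_{J^a}(M_{a+1})) from the empty matrix), the total 'number of balls' ∑_{k=1}^n (β_{2k} − β_{2k−1}), where β are the entries of M(λ,J) in reading order, equals |λ| = ∑_{i≥1} i·m_i. -/

import Mathlib

/-!
A matrix in `H_n` (a 2×n integer matrix whose entries read column by column, top then
bottom, are weakly increasing) is recorded by its reading sequence
`α_1 ≤ α_2 ≤ ⋯ ≤ α_{2n}`, as a sorted list of integers.
-/

/-- `Φ_1` adds `(1,3,…,2n−1)` to the top row and `(2,4,…,2n)` to the bottom row,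
i.e. it adds `k` to the `k`-th entry (1-based) of the reading sequence. -/
def Phi1 (l : List ℤ) : List ℤ := l.mapIdx (fun i a => a + (i : ℤ) + 1)

/-- `Ω_X` inserts two copies of each element of the finite multiset `X` (recorded as a
list) into the sorted reading sequence. -/
def OmegaL (X : List ℤ) (l : List ℤ) : List ℤ :=
  X.foldr (fun x m => List.orderedInsert (· ≤ ·) x (List.orderedInsert (· ≤ ·) x m)) l

/-- The recursive construction: `Mrec J h k` is the matrix `M_{h+1-k}`, where
`M_{h+1}` is the empty matrix and `M_a = Φ_1(Ω_{J^a}(M_{a+1}))`. -/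
def Mrec (J : ℕ → List ℤ) (h : ℕ) : ℕ → List ℤ
  | 0 => []
  | k + 1 => Phi1 (OmegaL (J (h - k)) (Mrec J h k))

/-- The number of balls `∑_{k=1}^n (β_{2k} − β_{2k−1})` of the reading sequence
`β_1 < β_2 < ⋯ < β_{2n}` (the alternating sum over consecutive pairs). -/
def ballsOf : List ℤ → ℤ
  | a :: b :: t => (b - a) + ballsOf t
  | _ => 0

lemma ballsOf_shift : ∀ (l : List ℤ) (c : ℤ),
    ballsOf (l.mapIdx fun i a => a + ((i : ℤ) + c)) = ballsOf l + (l.length / 2 : ℕ)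
  | [], c => by simp [ballsOf]
  | [a], c => by simp [ballsOf, List.mapIdx_cons]
  | a :: b :: t, c => by
    rw [List.mapIdx_cons, List.mapIdx_cons]
    have hf : (fun (i : ℕ) (x : ℤ) => x + ((↑(i + 1 + 1) : ℤ) + c))
        = fun (i : ℕ) (x : ℤ) => x + ((i : ℤ) + (c + 2)) := by
      funext i x; push_cast; ring
    rw [hf, ballsOf, ballsOf_shift t (c + 2), ballsOf]
    have : (a :: b :: t).length / 2 = t.length / 2 + 1 := by
      simp [List.length_cons]; omega
    rw [this]
    push_cast
    ring

lemma ballsOf_Phi1 (l : List ℤ) : ballsOf (Phi1 l) = ballsOf l + (l.length / 2 : ℕ) := by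
  have : Phi1 l = l.mapIdx fun i a => a + ((i : ℤ) + 1) := by
    unfold Phi1; congr 1; funext i a; ring
  rw [this, ballsOf_shift]

lemma ballsOf_DI : ∀ (l : List ℤ), 2 ∣ l.length → ∀ (x : ℤ),
    ballsOf (List.orderedInsert (· ≤ ·) x (List.orderedInsert (· ≤ ·) x l)) = ballsOf l
  | [], _, x => by simp [List.orderedInsert, ballsOf]
  | [a], hl, x => by simp at hl
  | a :: b :: t, hl, x => by
    have ht : 2 ∣ t.length := by simp at hl ⊢; omega
    by_cases hxa : x ≤ a
    · simp [List.orderedInsert, hxa, ballsOf]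
    · by_cases hxb : x ≤ b
      · simp [List.orderedInsert, hxa, hxb, le_refl, ballsOf]; ring
      · simp only [List.orderedInsert, if_neg hxa, if_neg hxb, ballsOf,
          ballsOf_DI t ht x]

lemma length_OmegaL (X l : List ℤ) : (OmegaL X l).length = l.length + 2 * X.length := by
  induction X with
  | nil => simp [OmegaL]
  | cons x X ih =>
    simp only [OmegaL, List.foldr_cons] at ih ⊢
    rw [List.orderedInsert_length, List.orderedInsert_length, ih, List.length_cons]
    ring

lemma ballsOf_OmegaL (X l : List ℤ) (hl : 2 ∣ l.length) :
    ballsOf (OmegaL X l) = ballsOf l := by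
  induction X with
  | nil => simp [OmegaL]
  | cons x X ih =>
    simp only [OmegaL, List.foldr_cons] at ih ⊢
    rw [ballsOf_DI _ ?_ x, ih]
    show 2 ∣ (OmegaL X l).length
    rw [length_OmegaL]
    omega

lemma length_Mrec (J : ℕ → List ℤ) (h : ℕ) : ∀ k,
    (Mrec J h k).length = 2 * ∑ j ∈ Finset.range k, (J (h - j)).length
  | 0 => by simp [Mrec]
  | k + 1 => by
    rw [Mrec, Phi1, List.length_mapIdx, length_OmegaL, length_Mrec J h k,
      Finset.sum_range_succ]
    ring

lemma balls_Mrec_aux (J : ℕ → List ℤ) (h : ℕ) : ∀ k,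
    ballsOf (Mrec J h k) = ∑ j ∈ Finset.range k, ((k - j : ℕ) : ℤ) * ((J (h - j)).length : ℤ)
  | 0 => by simp [Mrec, ballsOf]
  | k + 1 => by
    rw [Mrec, ballsOf_Phi1, ballsOf_OmegaL _ _ (by rw [length_Mrec]; omega),
      balls_Mrec_aux J h k, length_OmegaL, length_Mrec]
    have hdiv : (2 * ∑ j ∈ Finset.range k, (J (h - j)).length + 2 * (J (h - k)).length) / 2
        = (∑ j ∈ Finset.range k, (J (h - j)).length) + (J (h - k)).length := by omega
    rw [hdiv, Finset.sum_range_succ]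
    push_cast
    have hcong : ∑ x ∈ Finset.range k, ((k + 1 - x : ℕ) : ℤ) * ((J (h - x)).length : ℤ)
        = ∑ x ∈ Finset.range k, (((k - x : ℕ) : ℤ) + 1) * ((J (h - x)).length : ℤ) := by
      refine Finset.sum_congr rfl fun x hx => ?_
      rw [Finset.mem_range] at hx
      have : ((k + 1 - x : ℕ) : ℤ) = ((k - x : ℕ) : ℤ) + 1 := by omega
      rw [this]
    rw [hcong]
    simp only [add_mul, one_mul, Finset.sum_add_distrib]
    have : ((k + 1 - k : ℕ) : ℤ) = 1 := by omega
    rw [this]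
    ring


/-- The number of balls of `M(λ,J) = M_1` equals `|λ| = ∑_{i≥1} i·m_i`. -/
theorem balls_Mrec (h : ℕ) (m : ℕ → ℕ) (J : ℕ → List ℤ)
    (hlen : ∀ i, (J i).length = m i) (hsort : ∀ i, (J i).Pairwise (· ≤ ·)) :
    ballsOf (Mrec J h h) = ∑ i ∈ Finset.Icc 1 h, (i : ℤ) * (m i : ℤ) := by
  rw [balls_Mrec_aux]
  simp only [hlen]
  have h1 : ∑ j ∈ Finset.range h, ((h - j : ℕ) : ℤ) * ((m (h - j) : ℕ) : ℤ)
      = ∑ j ∈ Finset.range h, ((j + 1 : ℕ) : ℤ) * ((m (j + 1) : ℕ) : ℤ) := by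
    rw [← Finset.sum_range_reflect (fun j => ((j + 1 : ℕ) : ℤ) * ((m (j + 1) : ℕ) : ℤ)) h]
    refine Finset.sum_congr rfl fun j hj => ?_
    rw [Finset.mem_range] at hj
    have : h - 1 - j + 1 = h - j := by omega
    rw [this]
  rw [h1, ← Finset.Ico_add_one_right_eq_Icc, Finset.sum_Ico_eq_sum_range]
  norm_num
  exact Finset.sum_congr rfl fun j _ => by push_cast; ring_nf
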